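/- Every answer context A can be uniquely decomposed around any chosen function-argument pair: if A = Â[(A₀[λx.Ǎ]) e] for a fixed occurrence of the binder λx with its argument e, then the subcontexts Â (outer), A₀ (between function and argument), and Ǎ (inner) are uniquely determined, and Â[Ǎ] is itself an answer context. -/

import Mathlib

set_option maxHeartbeats 1000000

/-- Terms of the call-by-need λ-calculus: e ::= x | λx.e | e e -/
inductive Term : Type
  | var : ℕ → Term
  | lam : ℕ → Term → Term
  | app : Term → Term → Term
deriving DecidableEq, Inhabited

/-- Substitution e{x := v}. -/
def subst : Term → ℕ → Term → Term
  | .var y, x, v => if y = x then v else .var y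
  | .lam y e, x, v => if y = x then .lam y e else .lam y (subst e x v)
  | .app e1 e2, x, v => .app (subst e1 x v) (subst e2 x v)

def FV : Term → Finset ℕ
  | .var y => {y}
  | .lam y e => FV e \ {y}
  | .app e1 e2 => FV e1 ∪ FV e2

def Closed (e : Term) : Prop := FV e = ∅

/-- Number of free occurrences of x. -/
def countFV (x : ℕ) : Term → ℕ
  | .var y => if y = x then 1 else 0
  | .lam y e => if y = x then 0 else countFV x e
  | .app e1 e2 => countFV x e1 + countFV x e2

def IsValue : Term → Prop
  | .lam _ _ => True
  | _ => False

/-- Answer contexts A ::= [] | A[λx.A] e -/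
inductive ACtx : Type
  | hole : ACtx
  | cons : ACtx → ℕ → ACtx → Term → ACtx
deriving DecidableEq

def plugA : ACtx → Term → Term
  | .hole, t => t
  | .cons A1 x A2 e, t => .app (plugA A1 (.lam x (plugA A2 t))) e

/-- Outer partial answer contexts Â ::= [] | A[Â] e -/
inductive AHat : Type
  | hole : AHat
  | cons : ACtx → AHat → Term → AHat
deriving DecidableEq

def plugHat : AHat → Term → Term
  | .hole, t => t
  | .cons A H e, t => .app (plugA A (plugHat H t)) e

/-- Inner partial answer contexts Ǎ ::= [] | A[λx.Ǎ] -/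
inductive ACheck : Type
  | hole : ACheck
  | cons : ACtx → ℕ → ACheck → ACheck
deriving DecidableEq

def plugCheck : ACheck → Term → Term
  | .hole, t => t
  | .cons A x C, t => plugA A (.lam x (plugCheck C t))

/-- Â[Ǎ] ∈ A : the composition of Â and Ǎ is an answer context. -/
def HatCheckOK (H : AHat) (C : ACheck) : Prop :=
  ∃ A : ACtx, ∀ t : Term, plugHat H (plugCheck C t) = plugA A t

/-- Evaluation contexts E ::= [] | E e | A[E] | Â[A[λx.Ǎ[E[x]]] E]  (Â[Ǎ] ∈ A) -/
inductive ECtx : Type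
  | hole : ECtx
  | appL : ECtx → Term → ECtx
  | inA : ACtx → ECtx → ECtx
  | need : AHat → ACtx → ℕ → ACheck → ECtx → ECtx → ECtx
deriving DecidableEq

def plugE : ECtx → Term → Term
  | .hole, t => t
  | .appL E e, t => .app (plugE E t) e
  | .inA A E, t => plugA A (plugE E t)
  | .need H A x C E1 E2, t =>
      plugHat H (.app (plugA A (.lam x (plugCheck C (plugE E1 (.var x))))) (plugE E2 t))

/-- Well-formedness: the side condition Â[Ǎ] ∈ A on the fourth production. -/
def EWF : ECtx → Prop
  | .hole => True
  | .appL E _ => EWF E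
  | .inA _ E => EWF E
  | .need H _ _ C E1 E2 => HatCheckOK H C ∧ EWF E1 ∧ EWF E2

/-- The β_need axiom (root redex → contractum). -/
inductive Red : Term → Term → Prop
  | mk (H : AHat) (A1 A2 : ACtx) (x : ℕ) (C : ACheck) (E : ECtx) (v : Term) :
      HatCheckOK H C → EWF E → IsValue v →
      Red (plugHat H (.app (plugA A1 (.lam x (plugCheck C (plugE E (.var x))))) (plugA A2 v)))
          (plugHat H (plugA A1 (plugA A2 (subst (plugCheck C (plugE E (.var x))) x v))))

/-- Compatible (contextual) closure of β_need. -/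
inductive Step : Term → Term → Prop
  | red {e e'} : Red e e' → Step e e'
  | appL {e1 e1' e2} : Step e1 e1' → Step (.app e1 e2) (.app e1' e2)
  | appR {e1 e2 e2'} : Step e2 e2' → Step (.app e1 e2) (.app e1 e2')
  | lam {x e e'} : Step e e' → Step (.lam x e) (.lam x e')

def Steps : Term → Term → Prop := Relation.ReflTransGen Step

/-- The equational theory λ_need ⊢ e = e'. -/
def EqNeed : Term → Term → Prop := Relation.EqvGen Step

def IsAnswer (t : Term) : Prop := ∃ (A : ACtx) (v : Term), IsValue v ∧ t = plugA A v

/-- Standard reduction: contract the β_need redex in evaluation position. -/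
def SR (e e' : Term) : Prop :=
  ∃ (E : ECtx) (a b : Term), EWF E ∧ Red a b ∧ e = plugE E a ∧ e' = plugE E b

def SRs : Term → Term → Prop := Relation.ReflTransGen SR
/- Parallel reduction ⇒ of λ_need (with parallel reduction of contexts). -/
mutual
inductive Par : Term → Term → Prop
  | refl (e) : Par e e
  | app {e1 e1' e2 e2'} : Par e1 e1' → Par e2 e2' → Par (.app e1 e2) (.app e1' e2')
  | lam {x e e'} : Par e e' → Par (.lam x e) (.lam x e')
  | redex {H H' : AHat} {A1 A1' A2 A2' : ACtx} {x : ℕ} {C C' : ACheck} {E E' : ECtx} {v v' : Term} :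
      HatCheckOK H C → HatCheckOK H' C' → EWF E → EWF E' → IsValue v → IsValue v' →
      ParHat H H' → ParA A1 A1' → ParA A2 A2' → ParCheck C C' → ParE E E' → Par v v' →
      Par (plugHat H (.app (plugA A1 (.lam x (plugCheck C (plugE E (.var x))))) (plugA A2 v)))
          (plugHat H' (plugA A1' (plugA A2' (subst (plugCheck C' (plugE E' (.var x))) x v'))))

inductive ParA : ACtx → ACtx → Prop
  | hole : ParA .hole .hole
  | cons {A1 A1' A2 A2' x e e'} :
      ParA A1 A1' → ParA A2 A2' → Par e e' → ParA (.cons A1 x A2 e) (.cons A1' x A2' e')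

inductive ParHat : AHat → AHat → Prop
  | hole : ParHat .hole .hole
  | cons {A A' H H' e e'} :
      ParA A A' → ParHat H H' → Par e e' → ParHat (.cons A H e) (.cons A' H' e')

inductive ParCheck : ACheck → ACheck → Prop
  | hole : ParCheck .hole .hole
  | cons {A A' x C C'} : ParA A A' → ParCheck C C' → ParCheck (.cons A x C) (.cons A' x C')

inductive ParE : ECtx → ECtx → Prop
  | hole : ParE .hole .hole
  | appL {E E' e e'} : ParE E E' → Par e e' → ParE (.appL E e) (.appL E' e')
  | inA {A A' E E'} : ParA A A' → ParE E E' → ParE (.inA A E) (.inA A' E')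
  | need {H H' A A' x C C' E1 E1' E2 E2'} :
      HatCheckOK H C → HatCheckOK H' C' →
      ParHat H H' → ParA A A' → ParCheck C C' → ParE E1 E1' → ParE E2 E2' →
      ParE (.need H A x C E1 E2) (.need H' A' x C' E1' E2')
end

/-- Curry-Feys style standard reduction sequences. -/
inductive SRSeq : List Term → Prop
  | var (x : ℕ) : SRSeq [Term.var x]
  | lam (x : ℕ) {es : List Term} : SRSeq es → SRSeq (es.map (Term.lam x))
  | step {e0 e1 : Term} {es : List Term} : SR e0 e1 → SRSeq (e1 :: es) → SRSeq (e0 :: e1 :: es)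
  | app {es es' : List Term} : SRSeq es → SRSeq es' → es ≠ [] → es' ≠ [] →
      SRSeq (es.map (fun e => Term.app e es'.head!) ++
             es'.tail.map (fun e' => Term.app es.getLast! e'))
/- Size metric on parallel reductions, as a relation. -/
mutual
inductive PSize : Term → Term → ℕ → Prop
  | refl (e) : PSize e e 0
  | app {e1 e1' e2 e2' n1 n2} :
      PSize e1 e1' n1 → PSize e2 e2' n2 → PSize (.app e1 e2) (.app e1' e2') (n1 + n2)
  | lam {x e e' n} : PSize e e' n → PSize (.lam x e) (.lam x e') n
  | redex {H H' : AHat} {A1 A1' A2 A2' : ACtx} {x : ℕ} {C C' : ACheck} {E E' : ECtx}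
      {v v' : Term} {n0 n1 n2 m m' n4 : ℕ} :
      HatCheckOK H C → HatCheckOK H' C' → EWF E → EWF E' → IsValue v → IsValue v' →
      HSize H H' n0 → ASize A1 A1' n1 → ASize A2 A2' n2 →
      CSize C C' m → ESize E E' m' → PSize v v' n4 →
      PSize (plugHat H (.app (plugA A1 (.lam x (plugCheck C (plugE E (.var x))))) (plugA A2 v)))
            (plugHat H' (plugA A1' (plugA A2' (subst (plugCheck C' (plugE E' (.var x))) x v'))))
            (1 + n0 + n1 + n2 + (m + m') +
              countFV x (plugCheck C' (plugE E' (.var x))) * n4)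

inductive ASize : ACtx → ACtx → ℕ → Prop
  | hole : ASize .hole .hole 0
  | cons {A1 A1' A2 A2' x e e' n1 n2 n3} :
      ASize A1 A1' n1 → ASize A2 A2' n2 → PSize e e' n3 →
      ASize (.cons A1 x A2 e) (.cons A1' x A2' e') (n1 + n2 + n3)

inductive HSize : AHat → AHat → ℕ → Prop
  | hole : HSize .hole .hole 0
  | cons {A A' H H' e e' n1 n2 n3} :
      ASize A A' n1 → HSize H H' n2 → PSize e e' n3 →
      HSize (.cons A H e) (.cons A' H' e') (n1 + n2 + n3)

inductive CSize : ACheck → ACheck → ℕ → Prop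
  | hole : CSize .hole .hole 0
  | cons {A A' x C C' n1 n2} :
      ASize A A' n1 → CSize C C' n2 → CSize (.cons A x C) (.cons A' x C') (n1 + n2)

inductive ESize : ECtx → ECtx → ℕ → Prop
  | hole : ESize .hole .hole 0
  | appL {E E' e e' n1 n2} :
      ESize E E' n1 → PSize e e' n2 → ESize (.appL E e) (.appL E' e') (n1 + n2)
  | inA {A A' E E' n1 n2} :
      ASize A A' n1 → ESize E E' n2 → ESize (.inA A E) (.inA A' E') (n1 + n2)
  | need {H H' A A' x C C' E1 E1' E2 E2' n0 n1 n2 n3 n4} :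
      HatCheckOK H C → HatCheckOK H' C' →
      HSize H H' n0 → ASize A A' n1 → CSize C C' n2 → ESize E1 E1' n3 → ESize E2 E2' n4 →
      ESize (.need H A x C E1 E2) (.need H' A' x C' E1' E2') (n0 + n1 + n2 + n3 + n4)
end

/-- Number of λ-binders on the path from the root of an answer context to its hole. -/
def lamDepth : ACtx → ℕ
  | .hole => 0
  | .cons A1 _ A2 _ => lamDepth A1 + 1 + lamDepth A2

/-- Number of application-argument positions on the path from the root to the hole. -/
def argDepth : ACtx → ℕ
  | .hole => 0
  | .cons A1 _ A2 _ => argDepth A1 + 1 + argDepth A2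

/-- Number of λ-binders in an inner partial answer context (identifies the depth of
a function-argument pair on the spine). -/
def aLams : ACtx → ℕ
  | .hole => 0
  | .cons A1 _ A2 _ => aLams A1 + 1 + aLams A2

def checkLams : ACheck → ℕ
  | .hole => 0
  | .cons A _ C => aLams A + 1 + checkLams C

/- General contexts C ::= [] | λx.C | C e | e C. -/
inductive Ctx : Type
  | hole : Ctx
  | lam : ℕ → Ctx → Ctx
  | appL : Ctx → Term → Ctx
  | appR : Term → Ctx → Ctx

def plugC : Ctx → Term → Term
  | .hole, t => t
  | .lam x c, t => .lam x (plugC c t)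
  | .appL c e, t => .app (plugC c t) e
  | .appR e c, t => .app e (plugC c t)

/-- Observational equivalence for λ_need. -/
def ObsEq (e1 e2 : Term) : Prop :=
  ∀ c : Ctx, ((∃ a, IsAnswer a ∧ EqNeed (plugC c e1) a) ↔ (∃ a, IsAnswer a ∧ EqNeed (plugC c e2) a))

/- The modified Ariola-Felleisen calculus. -/
inductive AafCtx : Type
  | hole : AafCtx
  | cons : ℕ → AafCtx → Term → AafCtx

def plugAaf : AafCtx → Term → Term
  | .hole, t => t
  | .cons x A e, t => .app (.lam x (plugAaf A t)) e

inductive EafCtx : Type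
  | hole : EafCtx
  | appL : EafCtx → Term → EafCtx
  | inA : AafCtx → EafCtx → EafCtx
  | need : ℕ → EafCtx → EafCtx → EafCtx

def plugEaf : EafCtx → Term → Term
  | .hole, t => t
  | .appL E e, t => .app (plugEaf E t) e
  | .inA A E, t => plugAaf A (plugEaf E t)
  | .need x E1 E2, t => .app (.lam x (plugEaf E1 (.var x))) (plugEaf E2 t)

/-- Axioms β'_need, lift', assoc' of the modified Ariola-Felleisen calculus. -/
inductive RedAF : Term → Term → Prop
  | deref {x E v} : IsValue v →
      RedAF (.app (.lam x (plugEaf E (.var x))) v) (subst (plugEaf E (.var x)) x v)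
  | lift {x A v e1 e2} : IsValue v →
      RedAF (.app (.app (.lam x (plugAaf A v)) e1) e2)
            (.app (.lam x (plugAaf A (.app v e2))) e1)
  | assoc {x y E A v e} : IsValue v →
      RedAF (.app (.lam x (plugEaf E (.var x))) (.app (.lam y (plugAaf A v)) e))
            (.app (.lam y (plugAaf A (.app (.lam x (plugEaf E (.var x))) v))) e)

def SRAF (e e' : Term) : Prop :=
  ∃ (E : EafCtx) (a b : Term), RedAF a b ∧ e = plugEaf E a ∧ e' = plugEaf E b

def SRAFs : Term → Term → Prop := Relation.ReflTransGen SRAF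

def IsAnswerAF (t : Term) : Prop := ∃ (A : AafCtx) (v : Term), IsValue v ∧ t = plugAaf A v
/- λ_step: labeled terms ê ::= x | λx.ê | ê ê | x:ê (labels are variables). -/
inductive LTerm : Type
  | var : ℕ → LTerm
  | lam : ℕ → LTerm → LTerm
  | app : LTerm → LTerm → LTerm
  | lab : ℕ → LTerm → LTerm
deriving DecidableEq, Inhabited

def toL : Term → LTerm
  | .var x => .var x
  | .lam x e => .lam x (toL e)
  | .app e1 e2 => .app (toL e1) (toL e2)

/-- Subterm relation on labeled terms. -/
inductive LSub : LTerm → LTerm → Prop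
  | refl (t) : LSub t t
  | lam {s x e} : LSub s e → LSub s (.lam x e)
  | appL {s e1 e2} : LSub s e1 → LSub s (.app e1 e2)
  | appR {s e1 e2} : LSub s e2 → LSub s (.app e1 e2)
  | lab {s x e} : LSub s e → LSub s (.lab x e)

/-- Consistently labeled: any two subterms with the same label are identical. -/
def CL (t : LTerm) : Prop :=
  ∀ x e1 e2, LSub (.lab x e1) t → LSub (.lab x e2) t → e1 = e2

/-- Whole-program label substitution ê₁{x := ê}: replace every subterm labeled x by x:ê. -/
def lsubst : LTerm → ℕ → LTerm → LTerm
  | .lab y e1, x, e => if y = x then .lab x e else .lab y (lsubst e1 x e)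
  | .lam y e1, x, e => .lam y (lsubst e1 x e)
  | .app e1 e2, x, e => .app (lsubst e1 x e) (lsubst e2 x e)
  | .var y, _, _ => .var y

/-- Variable substitution on labeled terms. -/
def vsubstL : LTerm → ℕ → LTerm → LTerm
  | .var y, x, v => if y = x then v else .var y
  | .lam y e1, x, v => if y = x then .lam y e1 else .lam y (vsubstL e1 x v)
  | .app e1 e2, x, v => .app (vsubstL e1 x v) (vsubstL e2 x v)
  | .lab y e1, x, v => .lab y (vsubstL e1 x v)

def lLabels : LTerm → Finset ℕ
  | .var _ => ∅
  | .lam _ e => lLabels e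
  | .app e1 e2 => lLabels e1 ∪ lLabels e2
  | .lab x e => insert x (lLabels e)

def lVars : LTerm → Finset ℕ
  | .var x => {x}
  | .lam x e => insert x (lVars e)
  | .app e1 e2 => lVars e1 ∪ lVars e2
  | .lab x e => insert x (lVars e)

/- λ_step evaluation contexts Ê ::= [] | Ê ê | x:Ê. -/
inductive LECtx : Type
  | hole : LECtx
  | appL : LECtx → LTerm → LECtx
  | lab : ℕ → LECtx → LECtx

def plugL : LECtx → LTerm → LTerm
  | .hole, t => t
  | .appL E e, t => .app (plugL E t) e
  | .lab x E, t => .lab x (plugL E t)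

/-- The hole is not under a label. -/
def NoLabel : LECtx → Prop
  | .hole => True
  | .appL E _ => NoLabel E
  | .lab _ _ => False

def compL : LECtx → LECtx → LECtx
  | .hole, E2 => E2
  | .appL E e, E2 => .appL (compL E E2) e
  | .lab x E, E2 => .lab x (compL E E2)

/-- ȳ:(λx.ê): a λ-abstraction under zero or more labels. -/
inductive IsLabeledLam : LTerm → ℕ → LTerm → Prop
  | base {x e} : IsLabeledLam (.lam x e) x e
  | lab {t x e y} : IsLabeledLam t x e → IsLabeledLam (.lab y t) x e

/-- The β_step reduction of λ_step. -/
inductive LStep : LTerm → LTerm → Prop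
  | noLab {E f x e1 e2 w} : NoLabel E → IsLabeledLam f x e1 →
      w ∉ lLabels (plugL E (.app f e2)) → w ∉ lVars (plugL E (.app f e2)) →
      LStep (plugL E (.app f e2)) (plugL E (vsubstL e1 x (.lab w e2)))
  | underLab {E1 E2 z f x e1 e2 w} : NoLabel E2 → IsLabeledLam f x e1 →
      w ∉ lLabels (plugL (compL E1 (.lab z E2)) (.app f e2)) →
      w ∉ lVars (plugL (compL E1 (.lab z E2)) (.app f e2)) →
      LStep (plugL (compL E1 (.lab z E2)) (.app f e2))
            (lsubst (plugL (compL E1 (.lab z E2)) (vsubstL e1 x (.lab w e2))) z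
                    (plugL E2 (vsubstL e1 x (.lab w e2))))

/- The CKH store machine (Launchbury's natural semantics as an abstract machine). -/
inductive CKHFrame : Type
  | arg : Term → CKHFrame
  | varF : ℕ → CKHFrame

abbrev Heap := List (ℕ × Term)

def tVars : Term → Finset ℕ
  | .var x => {x}
  | .lam x e => insert x (tVars e)
  | .app e1 e2 => tVars e1 ∪ tVars e2

def frameVars : List CKHFrame → Finset ℕ
  | [] => ∅
  | .arg e :: K => tVars e ∪ frameVars K
  | .varF x :: K => insert x (frameVars K)

def heapVars : Heap → Finset ℕ
  | [] => ∅
  | (x, e) :: Γ => insert x (tVars e ∪ heapVars Γ)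

structure CKHState where
  c : Term
  k : List CKHFrame
  h : Heap

inductive CKHStep : CKHState → CKHState → Prop
  | pusharg {e1 e2 K Γ} : CKHStep ⟨.app e1 e2, K, Γ⟩ ⟨e1, .arg e2 :: K, Γ⟩
  | descend {x e1 e2 K Γ y} :
      y ∉ tVars (Term.lam x e1) ∪ tVars e2 ∪ frameVars K ∪ heapVars Γ →
      CKHStep ⟨.lam x e1, .arg e2 :: K, Γ⟩ ⟨subst e1 x (.var y), K, (y, e2) :: Γ⟩
  | lookup {x e K Γ1 Γ2} :
      CKHStep ⟨.var x, K, Γ1 ++ (x, e) :: Γ2⟩ ⟨e, .varF x :: K, Γ1 ++ Γ2⟩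
  | update {v x K Γ} : IsValue v →
      CKHStep ⟨v, .varF x :: K, Γ⟩ ⟨v, K, (x, v) :: Γ⟩

/-- One pass of heap substitution: replace free variables by their heap terms, labeled. -/
def applyHeapOnce (Γ : Heap) (t : LTerm) : LTerm :=
  Γ.foldr (fun p t => vsubstL t p.1 (.lab p.1 (toL p.2))) t

/-- e{Γ}: substitute heap bindings as labeled terms (iterated to resolve chains). -/
def substHeap (Γ : Heap) (e : Term) : LTerm :=
  (applyHeapOnce Γ)^[Γ.length + 1] (toL e)

/-- φ_L: reconstruct a λ_step term from a CKH machine state. -/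
def buildL : Term → List CKHFrame → Heap → LTerm
  | e, [], Γ => substHeap Γ e
  | e, .arg e2 :: K, Γ => buildL (.app e e2) K Γ
  | e, .varF x :: K, Γ => buildL (.var x) K ((x, e) :: Γ)
/- The CK transition system for λ_need. -/
inductive CKF : Type
  | arg : Term → CKF
  | lamF : ℕ → CKF
  | bod : ℕ → List CKF → List CKF → CKF

/-- φ_F: convert a frame list to a λ_need context (as a function on terms). -/
def phiF : List CKF → Term → Term
  | [], t => t
  | .arg e :: K, t => phiF K (.app t e)
  | .lamF x :: K, t => phiF K (.lam x t)
  | .bod x K1 K2 :: K, t => phiF K (.app (phiF K2 (.lam x (phiF K1 (.var x)))) t)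

/-- balance: #arg-frames − #lam-frames, up to the first bod frame. -/
def bal : List CKF → ℤ
  | [] => 0
  | .arg _ :: K => bal K + 1
  | .lamF _ :: K => bal K - 1
  | .bod _ _ _ :: _ => 0

def argPre : List CKF → ℕ
  | [] => 0
  | .arg _ :: K => argPre K + 1
  | .lamF _ :: K => argPre K
  | .bod _ _ _ :: _ => 0

def lamPre : List CKF → ℕ
  | [] => 0
  | .arg _ :: K => lamPre K
  | .lamF _ :: K => lamPre K + 1
  | .bod _ _ _ :: _ => 0

mutual
/-- Substitution on frames. -/
def substF : CKF → ℕ → Term → CKF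
  | .arg e, x, v => .arg (subst e x v)
  | .lamF y, _, _ => .lamF y
  | .bod y K1 K2, x, v => .bod y (substFs K1 x v) (substFs K2 x v)

/-- Substitution on frame lists. -/
def substFs : List CKF → ℕ → Term → List CKF
  | [], _, _ => []
  | F :: K, x, v => substF F x v :: substFs K x v
end

/-- The CK transitions. -/
inductive CKStep : Term × List CKF → Term × List CKF → Prop
  | pusharg {e1 e2 K} : CKStep (.app e1 e2, K) (e1, .arg e2 :: K)
  | descend {x e K} : bal K > 0 → CKStep (.lam x e, K) (e, .lamF x :: K)
  | lookup {x e K1 K2 K} :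
      (∃ (H : AHat) (C : ACheck) (E1 : ECtx) (A2 : ACtx) (E : ECtx),
        HatCheckOK H C ∧ EWF E1 ∧ EWF E ∧
        (∀ t, phiF K1 t = plugCheck C (plugE E1 t)) ∧
        (∀ t, phiF K2 t = plugA A2 t) ∧
        (∀ t, phiF K t = plugE E (plugHat H t))) →
      CKStep (.var x, K1 ++ .lamF x :: K2 ++ .arg e :: K) (e, .bod x K1 K2 :: K)
  | beta {v x K1 K2 K3 K} : IsValue v →
      (∃ A : ACtx, ∀ t, phiF K3 t = plugA A t) →
      CKStep (v, K3 ++ .bod x K1 K2 :: K) (v, substFs K1 x v ++ K3 ++ K2 ++ K)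

/-- φ: reconstruct a λ_need term from a CK state. -/
def buildCK : Term × List CKF → Term
  | (e, K) => phiF K e

/- Labeled frames, for the ψ mapping from CK states to λ_step terms. -/
inductive LF : Type
  | arg : LTerm → LF
  | lamF : ℕ → LF
  | bod : ℕ → List LF → List LF → LF

mutual
def toLF : CKF → LF
  | .arg e => .arg (toL e)
  | .lamF x => .lamF x
  | .bod x K1 K2 => .bod x (toLFs K1) (toLFs K2)

def toLFs : List CKF → List LF
  | [] => []
  | F :: K => toLF F :: toLFs K
end

def phiLF : List LF → LTerm → LTerm
  | [], t => t
  | .arg e :: K, t => phiLF K (.app t e)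
  | .lamF x :: K, t => phiLF K (.lam x t)
  | .bod x K1 K2 :: K, t => phiLF K (.app (phiLF K2 (.lam x (phiLF K1 (.var x)))) t)

mutual
def lfLabels : LF → Finset ℕ
  | .arg e => lLabels e
  | .lamF _ => ∅
  | .bod _ K1 K2 => lfsLabels K1 ∪ lfsLabels K2

def lfsLabels : List LF → Finset ℕ
  | [] => ∅
  | F :: K => lfLabels F ∪ lfsLabels K
end

/-- Labeled answer contexts over λ_step terms. -/
inductive LACtx : Type
  | hole : LACtx
  | cons : LACtx → ℕ → LACtx → LTerm → LACtx

def plugLA : LACtx → LTerm → LTerm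
  | .hole, t => t
  | .cons A1 x A2 e, t => .app (plugLA A1 (.lam x (plugLA A2 t))) e

/-- ψ' : the (partial, relational) mapping from CK states to λ_step terms. -/
inductive PsiRel : List LF → LTerm → LTerm → Prop
  | nil {e} : PsiRel [] e e
  | arg {K e e1 r} : PsiRel K (.app e e1) r → PsiRel (.arg e1 :: K) e r
  | bod {x K1 K2 K e r} :
      PsiRel (K1 ++ .lamF x :: K2 ++ .arg e :: K) (.var x) r →
      PsiRel (.bod x K1 K2 :: K) e r
  | lamF {x K1 e1 K2 e y r} :
      (∃ A : LACtx, ∀ t, phiLF K1 t = plugLA A t) →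
      y ∉ lLabels e ∪ lLabels e1 ∪ lfsLabels K1 ∪ lfsLabels K2 →
      y ∉ lVars e ∪ lVars e1 →
      PsiRel (K1 ++ K2) (vsubstL e x (.lab y e1)) r →
      PsiRel (.lamF x :: K1 ++ .arg e1 :: K2) e r

/-! Read the spine of a context from the root to its hole as a word in the frames `[] e`
(an opening bracket) and `λx.[]` (a closing bracket). Answer contexts are then exactly the
balanced (Dyck) words, and a Dyck word determines its context. In the spine
`Â ++ ([] e) ++ A₀ ++ (λx.[]) ++ Ǎ` the chosen `λx` is pinned down by the number of binders in
`Ǎ`, the argument `e` is the bracket matching it because `A₀` is balanced, and `Â` is what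
precedes; every nonempty prefix of the spine of `Â` has positive height, so a balanced word
cannot be extended into it. Deleting the matched pair `e … λx` from a Dyck word leaves a Dyck
word, which is the spine of `Â[Ǎ]`. -/

theorem List.append_inj_of_rigid {α : Type*} {P Q : List α → Prop} {a b r s : List α}
    (h : a ++ r = b ++ s) (ha : P a) (hb : P b) (hr : Q r) (hs : Q s)
    (rigid : ∀ a w s, P a → P (a ++ w) → Q (w ++ s) → Q s → w = []) :
    a = b ∧ r = s := by
  rcases List.append_eq_append_iff.mp h with ⟨w, rfl, rfl⟩ | ⟨w, rfl, rfl⟩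
  · obtain rfl := rigid a w s ha hb hr hs
    simp
  · obtain rfl := rigid b w r hb ha hs hr
    simp

/-- A one-hole context of depth one on the spine of an answer context: `app e` is `[] e`,
`lam x` is `λx.[]`. -/
inductive CtxFrame : Type
  | app : Term → CtxFrame
  | lam : ℕ → CtxFrame

namespace CtxFrame

def plug : CtxFrame → Term → Term
  | app e, t => .app t e
  | lam x, t => .lam x t

def weight : CtxFrame → ℤ
  | app _ => 1
  | lam _ => -1

def isLam : CtxFrame → Bool
  | app _ => false
  | lam _ => true

theorem plug_inj {f g : CtxFrame} {t u : Term} : f.plug t = g.plug u ↔ f = g ∧ t = u := by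
  cases f <;> cases g <;> simp [plug, and_comm]

theorem plug_ne_var (f : CtxFrame) (t : Term) (y : ℕ) : f.plug t ≠ .var y := by
  cases f <;> simp [plug]

end CtxFrame

namespace Spine

open CtxFrame

def plug (l : List CtxFrame) (t : Term) : Term :=
  l.foldr CtxFrame.plug t

def height (l : List CtxFrame) : ℤ :=
  (l.map weight).sum

/-- The least height of a prefix. -/
def minHeight : List CtxFrame → ℤ
  | [] => 0
  | f :: l => min 0 (f.weight + minHeight l)

def IsBalanced (l : List CtxFrame) : Prop :=
  height l = 0 ∧ 0 ≤ minHeight l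

def lamCount (l : List CtxFrame) : ℕ :=
  l.countP isLam

@[simp] theorem plug_nil (t : Term) : plug [] t = t := rfl

@[simp] theorem plug_cons (f : CtxFrame) (l : List CtxFrame) (t : Term) :
    plug (f :: l) t = f.plug (plug l t) := rfl

theorem plug_append (a b : List CtxFrame) (t : Term) : plug (a ++ b) t = plug a (plug b t) :=
  List.foldr_append

theorem plug_injective {p q : List CtxFrame} (h : ∀ t, plug p t = plug q t) : p = q := by
  induction p generalizing q with
  | nil =>
    cases q with
    | nil => rfl
    | cons g q => exact absurd (h (.var 0)).symm (g.plug_ne_var _ 0)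
  | cons f p ih =>
    cases q with
    | nil => exact absurd (h (.var 0)) (f.plug_ne_var _ 0)
    | cons g q =>
      have hfg := fun t => CtxFrame.plug_inj.mp (h t)
      rw [(hfg (.var 0)).1, ih fun t => (hfg t).2]

@[simp] theorem height_nil : height [] = 0 := rfl

@[simp] theorem height_cons (f : CtxFrame) (l : List CtxFrame) :
    height (f :: l) = f.weight + height l := by
  simp [height]

@[simp] theorem height_append (a b : List CtxFrame) : height (a ++ b) = height a + height b := by
  simp [height]

theorem minHeight_nonpos (l : List CtxFrame) : minHeight l ≤ 0 := by
  cases l <;> simp [minHeight]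

theorem minHeight_append (a b : List CtxFrame) :
    minHeight (a ++ b) = min (minHeight a) (height a + minHeight b) := by
  induction a with
  | nil => simpa [minHeight] using minHeight_nonpos b
  | cons f a ih => simp only [List.cons_append, minHeight, ih, height_cons]; omega

theorem minHeight_le_height (l : List CtxFrame) : minHeight l ≤ height l := by
  induction l with
  | nil => rfl
  | cons f l ih => simp only [minHeight, height_cons]; omega

theorem minHeight_le_height_of_eq_append {l p s : List CtxFrame} (h : l = p ++ s) :
    minHeight l ≤ height p := by
  rw [h, minHeight_append]
  exact min_le_of_left_le (minHeight_le_height p)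

@[simp] theorem lamCount_append (a b : List CtxFrame) :
    lamCount (a ++ b) = lamCount a + lamCount b :=
  List.countP_append

@[simp] theorem lamCount_app_cons (e : Term) (l : List CtxFrame) :
    lamCount (.app e :: l) = lamCount l := by
  simp [lamCount, isLam]

@[simp] theorem lamCount_lam_cons (x : ℕ) (l : List CtxFrame) :
    lamCount (.lam x :: l) = lamCount l + 1 := by
  rw [lamCount, List.countP_cons]
  rfl

theorem IsBalanced.nil : IsBalanced [] := ⟨rfl, le_rfl⟩

theorem IsBalanced.bracket_iff {a : List CtxFrame} (ha : IsBalanced a) (b : List CtxFrame)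
    (e : Term) (x : ℕ) : IsBalanced (.app e :: (a ++ .lam x :: b)) ↔ IsBalanced b := by
  obtain ⟨ha, ha'⟩ := ha
  have := minHeight_nonpos b
  simp only [IsBalanced, minHeight, minHeight_append, height_cons, height_append, weight, ha]
  omega

theorem exists_eq_append_lam_of_minHeight_neg {m : List CtxFrame} (hm : minHeight m < 0) :
    ∃ p x q, m = p ++ .lam x :: q ∧ IsBalanced p := by
  induction m using List.reverseRecOn with
  | nil => simp [minHeight] at hm
  | append_singleton m f ih =>
    by_cases hm' : minHeight m < 0
    · obtain ⟨p, x, q, rfl, hp⟩ := ih hm'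
      exact ⟨p, x, q ++ [f], by simp, hp⟩
    · have := minHeight_le_height m
      cases f with
      | app e => simp [minHeight_append, minHeight, weight] at hm; omega
      | lam x =>
        simp only [minHeight_append, minHeight, weight] at hm
        exact ⟨m, x, [], rfl, by omega, by omega⟩

theorem IsBalanced.remove_bracket {u v s : List CtxFrame} {e : Term} {x : ℕ}
    (h : IsBalanced (u ++ .app e :: v ++ .lam x :: s)) (hv : IsBalanced v) :
    IsBalanced (u ++ s) := by
  obtain ⟨h, h'⟩ := h
  obtain ⟨hv, -⟩ := hv
  have := minHeight_nonpos s
  have := minHeight_le_height u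
  constructor
  · simp_all [weight]
  · simp only [minHeight_append, minHeight, height_append, height_cons, weight, hv] at h h' ⊢
    omega

theorem append_lam_inj_of_lamCount_eq {a b r s : List CtxFrame} {x y : ℕ}
    (h : a ++ .lam x :: r = b ++ .lam y :: s) (hrs : lamCount r = lamCount s) :
    a = b ∧ x = y ∧ r = s := by
  have hsplit := List.append_inj_of_rigid (P := fun _ => True)
    (Q := fun r => ∃ x r', r = .lam x :: r' ∧ lamCount r' = lamCount s) h trivial trivial
    ⟨x, r, rfl, hrs⟩ ⟨y, s, rfl, rfl⟩ ?_
  · simpa using hsplit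
  rintro - (_ | ⟨f, w⟩) s' - - ⟨x, r', hr', hcount⟩ ⟨y, s'', rfl, hcount'⟩
  · rfl
  · simp only [List.cons_append, List.cons.injEq] at hr'
    obtain ⟨-, rfl⟩ := hr'
    simp only [lamCount_append, lamCount_lam_cons] at hcount
    omega

theorem append_app_inj_of_isBalanced {a b v v' : List CtxFrame} {e e' : Term}
    (h : a ++ .app e :: v = b ++ .app e' :: v') (hv : IsBalanced v) (hv' : IsBalanced v') :
    a = b ∧ e = e' ∧ v = v' := by
  have hsplit := List.append_inj_of_rigid (P := fun _ => True)
    (Q := fun r => ∃ e v, r = .app e :: v ∧ IsBalanced v) h trivial trivial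
    ⟨e, v, rfl, hv⟩ ⟨e', v', rfl, hv'⟩ ?_
  · simpa using hsplit
  rintro - (_ | ⟨f, w⟩) s - - ⟨e, v, hv, hbal, hmin⟩ ⟨e', v', rfl, hbal', -⟩
  · rfl
  · simp only [List.cons_append, List.cons.injEq] at hv
    obtain ⟨-, rfl⟩ := hv
    have := minHeight_le_height_of_eq_append rfl (p := w) (s := .app e' :: v')
    simp only [height_append, height_cons, weight, hbal'] at hbal
    omega

theorem IsBalanced.append_lam_inj {a b r s : List CtxFrame} {x y : ℕ}
    (ha : IsBalanced a) (hb : IsBalanced b) (h : a ++ .lam x :: r = b ++ .lam y :: s) :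
    a = b ∧ x = y ∧ r = s := by
  have hsplit := List.append_inj_of_rigid (P := IsBalanced)
    (Q := fun r => ∃ x r', r = .lam x :: r') h ha hb ⟨x, r, rfl⟩ ⟨y, s, rfl⟩ ?_
  · simpa using hsplit
  rintro a (_ | ⟨f, w⟩) s ⟨ha, -⟩ ⟨-, haw⟩ ⟨x, r', hr'⟩ -
  · rfl
  · simp only [List.cons_append, List.cons.injEq] at hr'
    obtain ⟨rfl, -⟩ := hr'
    have := minHeight_le_height_of_eq_append (l := a ++ .lam x :: w) (p := a ++ [.lam x])
      (s := w) (by simp)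
    simp [weight, ha] at this
    omega

end Spine

open Spine

def ACtx.spine : ACtx → List CtxFrame
  | .hole => []
  | .cons A1 x A2 e => .app e :: (A1.spine ++ .lam x :: A2.spine)

def AHat.spine : AHat → List CtxFrame
  | .hole => []
  | .cons A H e => .app e :: (A.spine ++ H.spine)

def ACheck.spine : ACheck → List CtxFrame
  | .hole => []
  | .cons A x C => A.spine ++ .lam x :: C.spine

theorem ACtx.plug_spine (A : ACtx) (t : Term) : Spine.plug A.spine t = plugA A t := by
  induction A generalizing t with
  | hole => rfl
  | cons A1 x A2 e ih1 ih2 => simp [spine, plugA, plug_append, CtxFrame.plug, ih1, ih2]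

theorem AHat.plug_spine (H : AHat) (t : Term) : Spine.plug H.spine t = plugHat H t := by
  induction H generalizing t with
  | hole => rfl
  | cons A H e ih => simp [spine, plugHat, plug_append, CtxFrame.plug, ACtx.plug_spine, ih]

theorem ACheck.plug_spine (C : ACheck) (t : Term) : Spine.plug C.spine t = plugCheck C t := by
  induction C generalizing t with
  | hole => rfl
  | cons A x C ih => simp [spine, plugCheck, plug_append, CtxFrame.plug, ACtx.plug_spine, ih]

theorem ACtx.isBalanced_spine (A : ACtx) : IsBalanced A.spine := by
  induction A with
  | hole => exact .nil
  | cons A1 x A2 e ih1 ih2 => exact (ih1.bracket_iff _ e x).mpr ih2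

theorem ACtx.lamCount_spine (A : ACtx) : lamCount A.spine = aLams A := by
  induction A with
  | hole => rfl
  | cons A1 x A2 e ih1 ih2 =>
    simp [spine, aLams, ih1, ih2]
    omega

theorem ACheck.lamCount_spine (C : ACheck) : lamCount C.spine = checkLams C := by
  induction C with
  | hole => rfl
  | cons A x C ih =>
    simp [spine, checkLams, A.lamCount_spine, ih]
    omega

theorem AHat.one_le_height_of_spine_eq_append (H : AHat) {w s : List CtxFrame}
    (h : H.spine = w ++ s) (hw : w ≠ []) : 1 ≤ height w := by
  induction H generalizing w with
  | hole => simp_all [spine]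
  | cons A H e ih =>
    rcases w with _ | ⟨f, w⟩
    · exact absurd rfl hw
    simp only [spine, List.cons_append, List.cons.injEq] at h
    obtain ⟨rfl, h⟩ := h
    suffices 0 ≤ height w by simp [CtxFrame.weight]; omega
    rcases List.append_eq_append_iff.mp h with ⟨u, rfl, hu⟩ | ⟨u, hA, -⟩
    · by_cases hu' : u = []
      · simp [hu', (ACtx.isBalanced_spine A).1]
      · have := ih hu hu'
        simp only [height_append, (ACtx.isBalanced_spine A).1]
        omega
    · exact (ACtx.isBalanced_spine A).2.trans (minHeight_le_height_of_eq_append hA)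

theorem Spine.IsBalanced.append_spine_inj {a b : List CtxFrame} {H H' : AHat}
    (ha : IsBalanced a) (hb : IsBalanced b) (h : a ++ H.spine = b ++ H'.spine) :
    a = b ∧ H.spine = H'.spine := by
  refine List.append_inj_of_rigid (P := IsBalanced) (Q := fun r => ∃ H : AHat, r = H.spine)
    h ha hb ⟨H, rfl⟩ ⟨H', rfl⟩ ?_
  rintro a w s ⟨ha, -⟩ ⟨haw, -⟩ ⟨H, hH⟩ -
  by_contra hw
  have := H.one_le_height_of_spine_eq_append hH.symm hw
  simp only [height_append, ha] at haw
  omega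

theorem ACtx.spine_injective : Function.Injective ACtx.spine := by
  intro A B h
  induction A generalizing B with
  | hole => cases B <;> simp_all [spine]
  | cons A1 x A2 e ih1 ih2 =>
    cases B with
    | hole => simp [spine] at h
    | cons B1 y B2 f =>
      simp only [spine, List.cons.injEq, CtxFrame.app.injEq] at h
      obtain ⟨rfl, h⟩ := h
      obtain ⟨h1, rfl, h2⟩ := A1.isBalanced_spine.append_lam_inj B1.isBalanced_spine h
      rw [ih1 h1, ih2 h2]

theorem ACheck.spine_injective : Function.Injective ACheck.spine := by
  intro C D h
  induction C generalizing D with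
  | hole => cases D <;> simp_all [spine]
  | cons A x C ih =>
    cases D with
    | hole => simp [spine] at h
    | cons B y D =>
      obtain ⟨hA, rfl, hC⟩ := A.isBalanced_spine.append_lam_inj B.isBalanced_spine h
      rw [ACtx.spine_injective hA, ih hC]

theorem AHat.spine_injective : Function.Injective AHat.spine := by
  intro H H' h
  induction H generalizing H' with
  | hole => cases H' <;> simp_all [spine]
  | cons A H e ih =>
    cases H' with
    | hole => simp [spine] at h
    | cons B H' f =>
      simp only [spine, List.cons.injEq, CtxFrame.app.injEq] at h
      obtain ⟨rfl, h⟩ := h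
      obtain ⟨hA, hH⟩ := A.isBalanced_spine.append_spine_inj B.isBalanced_spine h
      rw [ACtx.spine_injective hA, ih hH]

theorem Spine.IsBalanced.exists_spine_eq : ∀ {l : List CtxFrame}, IsBalanced l →
    ∃ A : ACtx, A.spine = l
  | [], _ => ⟨.hole, rfl⟩
  | .lam x :: l, ⟨_, hmin⟩ => by
    have := minHeight_nonpos l
    simp [minHeight, CtxFrame.weight] at hmin
    omega
  | .app e :: l, hbal => by
    have hneg : minHeight l < 0 := by
      have := minHeight_le_height l
      simp [IsBalanced, CtxFrame.weight] at hbal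
      omega
    obtain ⟨p, x, q, rfl, hp⟩ := exists_eq_append_lam_of_minHeight_neg hneg
    have hq := (hp.bracket_iff q e x).mp hbal
    obtain ⟨A1, rfl⟩ := hp.exists_spine_eq
    obtain ⟨A2, rfl⟩ := hq.exists_spine_eq
    exact ⟨.cons A1 x A2 e, rfl⟩
termination_by l => l.length

theorem plugHat_app_lam_eq_plug (H : AHat) (A : ACtx) (x : ℕ) (C : ACheck) (e t : Term) :
    plugHat H (.app (plugA A (.lam x (plugCheck C t))) e) =
      Spine.plug (H.spine ++ .app e :: A.spine ++ .lam x :: C.spine) t := by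
  simp [plug_append, CtxFrame.plug, AHat.plug_spine, ACtx.plug_spine, ACheck.plug_spine]

/-- Unique decomposition of an answer context around a chosen function-argument pair:
if A = Â[(A₀[λx.Ǎ]) e] (the pair identified by the number of λ-binders in Ǎ), then Â,
A₀, Ǎ, x, and e are uniquely determined, and Â[Ǎ] is itself an answer context. -/
theorem answer_ctx_unique_decomposition
    (H1 H2 : AHat) (A1 A2 : ACtx) (C1 C2 : ACheck) (x1 x2 : ℕ) (e1 e2 : Term)
    (hans : ∃ A : ACtx, ∀ t : Term,
        plugHat H1 (.app (plugA A1 (.lam x1 (plugCheck C1 t))) e1) = plugA A t)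
    (heq : ∀ t : Term,
        plugHat H1 (.app (plugA A1 (.lam x1 (plugCheck C1 t))) e1) =
        plugHat H2 (.app (plugA A2 (.lam x2 (plugCheck C2 t))) e2))
    (hocc : checkLams C1 = checkLams C2) :
    (H1 = H2 ∧ A1 = A2 ∧ C1 = C2 ∧ x1 = x2 ∧ e1 = e2) ∧ HatCheckOK H1 C1 := by
  have hspine := plug_injective fun t => by simpa only [plugHat_app_lam_eq_plug] using heq t
  obtain ⟨hpre, rfl, hC⟩ := append_lam_inj_of_lamCount_eq hspine
    (by simpa only [ACheck.lamCount_spine] using hocc)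
  obtain ⟨hH, rfl, hA⟩ :=
    append_app_inj_of_isBalanced hpre A1.isBalanced_spine A2.isBalanced_spine
  refine ⟨⟨AHat.spine_injective hH, ACtx.spine_injective hA, ACheck.spine_injective hC,
    rfl, rfl⟩, ?_⟩
  obtain ⟨A, hplug⟩ := hans
  have hAspine : A.spine = H1.spine ++ .app e1 :: A1.spine ++ .lam x1 :: C1.spine :=
    plug_injective fun t => by rw [ACtx.plug_spine, ← hplug, plugHat_app_lam_eq_plug]
  have hbal := (hAspine ▸ A.isBalanced_spine).remove_bracket A1.isBalanced_spine
  obtain ⟨A', hA'⟩ := hbal.exists_spine_eq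
  refine ⟨A', fun t => ?_⟩
  rw [← ACtx.plug_spine, hA', plug_append, AHat.plug_spine, ACheck.plug_spine]
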